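/- Let h : SL(2,ℝ) → ℂ be continuous, compactly supported and bi-SO(2)-invariant (h(k₁ g k₂) = h(g) for all k₁, k₂ ∈ SO(2) and g ∈ SL(2,ℝ)), and let s ∈ ℂ with Re s > 1. Then there exists a complex number ĥ(s) such that ∫_{SL(2,ℝ)} h(x) · (Im((g·x)·i))^s dμ_G(x) = ĥ(s) · (Im(g·i))^s for every g ∈ SL(2,ℝ), and with this same ĥ(s) one has the eigenfunction property ∫_{SL(2,ℝ)} h(x) · E((g·x)·i; s) dμ_G(x) = ĥ(s) · E(g·i; s) for every g ∈ SL(2,ℝ). -/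

import Mathlib

open MeasureTheory

/-- The summand of the Eisenstein series: `(Im z)^s / |m z + n|^{2s}`. -/
noncomputable def eisTerm (s : ℂ) (z : ℂ) (p : ℤ × ℤ) : ℂ :=
  (z.im : ℂ) ^ s / ((‖(p.1 : ℂ) * z + (p.2 : ℂ)‖ : ℝ) : ℂ) ^ (2 * s)

/-- The Eisenstein series `E(z; s)`, summed over coprime pairs of integers. -/
noncomputable def eis (s : ℂ) (z : ℂ) : ℂ :=
  ∑' p : {p : ℤ × ℤ // Int.gcd p.1 p.2 = 1}, eisTerm s z (p : ℤ × ℤ)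

/-- The Möbius action of a real `2 × 2` matrix on a point of the complex plane. -/
noncomputable def moebiusM (m : Matrix (Fin 2) (Fin 2) ℝ) (z : ℂ) : ℂ :=
  ((m 0 0 : ℂ) * z + (m 0 1 : ℂ)) / ((m 1 0 : ℂ) * z + (m 1 1 : ℂ))

/-- `SL(2, ℝ)` carries the subspace topology from the space of matrices. -/
noncomputable instance : TopologicalSpace (Matrix.SpecialLinearGroup (Fin 2) ℝ) :=
  inferInstanceAs (TopologicalSpace {A : Matrix (Fin 2) (Fin 2) ℝ // A.det = 1})

/-- `SO(2)`: the stabilizer of `i ∈ ℍ` in `SL(2, ℝ)`. -/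
def SO2 : Set (Matrix.SpecialLinearGroup (Fin 2) ℝ) :=
  {k | moebiusM (k : Matrix (Fin 2) (Fin 2) ℝ) Complex.I = Complex.I}

/-
Write `g = p k` with `p = (g • i).toSL2R` upper triangular and `k` in the stabilizer `SO(2)` of `i`.
Left translation by `k` is absorbed by the left `SO(2)`-invariance of `h` and the left invariance
of Haar measure, while `Im (p • w) = Im (g • i) · Im w`; hence `g ↦ Im (g • i) ^ s` is an
eigenfunction of `f ↦ ∫ h x f (g x) dx` with eigenvalue `ĥ(s) = ∫ h x Im (x • i) ^ s dx`.
Each term of `E(· ; s)` is `Im (γ • ·) ^ s` for some `γ ∈ SL(2, ℝ)` with bottom row `(m, n)`, so it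
is an eigenfunction with the same eigenvalue. On the compact set `g • supp h • i` the terms are
bounded by `C ‖(m, n)‖ ^ (-2 Re s)`, which is summable for `Re s > 1`, so sum and integral commute.
-/

open scoped MatrixGroups
open UpperHalfPlane

/- The topology on `SL(2, ℝ)` fixed above is Mathlib's only up to unfolding, so instance search
does not find Mathlib's instances for it. -/
instance : IsTopologicalGroup SL(2, ℝ) := Matrix.SpecialLinearGroup.topologicalGroup

instance : ContinuousSMul SL(2, ℝ) ℍ := instContinuousSMulSL2R

lemma moebiusM_eq_coe_smul (g : SL(2, ℝ)) (z : ℍ) : moebiusM g z = ↑(g • z) := by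
  simp [moebiusM, coe_specialLinearGroup_apply]

lemma SO2_eq_stabilizer : SO2 = MulAction.stabilizer SL(2, ℝ) I := by
  ext k
  rw [SO2, Set.mem_ofPred_eq, ← coe_I, moebiusM_eq_coe_smul, coe_inj]
  rfl

lemma im_smul_eq_div_normSq_of_SL (g : SL(2, ℝ)) (z : ℍ) :
    (g • z).im = z.im / Complex.normSq (g 1 0 * z + g 1 1) := by
  rw [MulAction.compHom_smul_def, im_smul_eq_div_normSq]
  simp [denom]

lemma im_toSL2R_smul (z w : ℍ) : (z.toSL2R • w).im = z.im * w.im := by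
  rw [im_smul_eq_div_normSq_of_SL]
  simp [Complex.normSq_ofReal, z.im_pos.le, mul_comm]

lemma ofReal_im_smul_cpow (g : SL(2, ℝ)) (z : ℍ) (s : ℂ) :
    ((g • z).im : ℂ) ^ s =
      (z.im : ℂ) ^ s / ((‖(g 1 0 : ℂ) * z + g 1 1‖ : ℝ) : ℂ) ^ (2 * s) := by
  rw [im_smul_eq_div_normSq_of_SL, Complex.normSq_eq_norm_sq, Complex.ofReal_div,
    Complex.div_cpow_ofReal_nonneg z.im_pos.le (sq_nonneg _), Complex.cpow_ofNat_mul, sq,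
    Complex.ofReal_mul, Complex.mul_cpow_ofReal_nonneg (norm_nonneg _) (norm_nonneg _), sq]

lemma exists_eisTerm_eq_im_smul_cpow {p : ℤ × ℤ} (hp : Int.gcd p.1 p.2 = 1) :
    ∃ γ : SL(2, ℝ), ∀ s (z : ℍ), eisTerm s z p = ((γ • z).im : ℂ) ^ s := by
  have hcop : IsCoprime (p.1 : ℝ) (p.2 : ℝ) := (Int.isCoprime_iff_gcd_eq_one.2 hp).intCast
  obtain ⟨γ, -, hγ⟩ := ModularGroup.bottom_row_surj (R := ℝ) (a := ![(p.1 : ℝ), p.2]) hcop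
  refine ⟨γ, fun s z => ?_⟩
  have h0 : γ 1 0 = p.1 := by simpa using congrFun hγ 0
  have h1 : γ 1 1 = p.2 := by simpa using congrFun hγ 1
  rw [ofReal_im_smul_cpow, h0, h1, eisTerm]
  push_cast
  rfl

section Eigenfunction

variable {_ : MeasurableSpace SL(2, ℝ)} [MeasurableMul SL(2, ℝ)] (μ : Measure SL(2, ℝ))
  [μ.IsMulLeftInvariant]

theorem integral_mul_im_smul_I_cpow (h : SL(2, ℝ) → ℂ)
    (hh : ∀ k ∈ MulAction.stabilizer SL(2, ℝ) I, ∀ x, h (k * x) = h x) (s : ℂ) (g : SL(2, ℝ)) :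
    ∫ x, h x * (((g * x) • I).im : ℂ) ^ s ∂μ =
      (∫ x, h x * ((x • I).im : ℂ) ^ s ∂μ) * ((g • I).im : ℂ) ^ s := by
  set p := (g • I).toSL2R
  have hk : p⁻¹ * g ∈ MulAction.stabilizer SL(2, ℝ) I := by
    rw [MulAction.mem_stabilizer_iff, mul_smul, inv_smul_eq_iff, toSL2R_smul_I]
  have hscale : ∀ x : SL(2, ℝ), (((p * x) • I).im : ℂ) ^ s =
      ((g • I).im : ℂ) ^ s * ((x • I).im : ℂ) ^ s := fun x => by
    rw [mul_smul, im_toSL2R_smul, Complex.ofReal_mul,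
      Complex.mul_cpow_ofReal_nonneg (g • I).im_pos.le (x • I).im_pos.le]
  calc ∫ x, h x * (((g * x) • I).im : ℂ) ^ s ∂μ
      = ∫ x, h ((p⁻¹ * g) * x) * (((p * ((p⁻¹ * g) * x)) • I).im : ℂ) ^ s ∂μ := by
        simp only [hh _ hk, ← mul_assoc, mul_inv_cancel, one_mul]
    _ = ∫ x, h x * (((p * x) • I).im : ℂ) ^ s ∂μ :=
        integral_mul_left_eq_self (fun y => h y * (((p * y) • I).im : ℂ) ^ s) _
    _ = _ := by
        simp only [hscale, mul_left_comm (h _), integral_const_mul, mul_comm]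

end Eigenfunction

theorem integral_mul_tsum_of_norm_le {ι X 𝕜 : Type*} [RCLike 𝕜] [Countable ι]
    [MeasurableSpace X] {μ : Measure X} {h : X → 𝕜} {F : ι → X → 𝕜} {c : ι → ℝ} (hh : Integrable h μ)
    (hF : ∀ i, AEStronglyMeasurable (F i) μ) (hFc : ∀ i x, h x ≠ 0 → ‖F i x‖ ≤ c i)
    (hc : Summable c) :
    ∫ x, h x * ∑' i, F i x ∂μ = ∑' i, ∫ x, h x * F i x ∂μ := by
  have hbound : ∀ i x, ‖h x * F i x‖ ≤ ‖h x‖ * c i := fun i x => by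
    by_cases hx : h x = 0
    · simp [hx]
    · rw [norm_mul]
      exact mul_le_mul_of_nonneg_left (hFc i x hx) (norm_nonneg _)
  have hint : ∀ i, Integrable (fun x => h x * F i x) μ := fun i =>
    (hh.norm.mul_const (c i)).mono' (hh.1.mul (hF i)) (ae_of_all _ (hbound i))
  simp_rw [← tsum_mul_left]
  refine (integral_tsum_of_summable_integral_norm hint ?_).symm
  refine (hc.mul_left (∫ x, ‖h x‖ ∂μ)).of_nonneg_of_le
    (fun i => integral_nonneg fun x => norm_nonneg _) fun i => ?_
  rw [← integral_mul_const]
  exact integral_mono (hint i).norm (hh.norm.mul_const _) (hbound i)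

lemma norm_eisTerm {p : ℤ × ℤ} (hp : p ≠ 0) (s : ℂ) (z : ℍ) :
    ‖eisTerm s z p‖ = z.im ^ s.re * ‖(p.1 : ℂ) * z + p.2‖ ^ (-(2 * s.re)) := by
  have hne : (p.1 : ℂ) * z + p.2 ≠ 0 := by
    simpa using linear_ne_zero (cd := ![(p.1 : ℝ), p.2]) z (by simpa [Prod.ext_iff] using hp)
  rw [eisTerm, norm_div, coe_im, Complex.norm_cpow_eq_rpow_re_of_pos z.im_pos,
    Complex.norm_cpow_eq_rpow_re_of_pos (norm_pos_iff.2 hne), Real.rpow_neg (norm_nonneg _),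
    div_eq_mul_inv]
  simp

lemma exists_norm_eisTerm_le_of_isCompact {K : Set ℍ} (hK : IsCompact K) {s : ℂ}
    (hs : 0 ≤ s.re) :
    ∃ C, ∀ z ∈ K, ∀ p : ℤ × ℤ, p ≠ 0 → ‖eisTerm s z p‖ ≤ C * ‖![p.1, p.2]‖ ^ (-(2 * s.re)) := by
  obtain ⟨A, B, hB, hKAB⟩ := subset_verticalStrip_of_isCompact hK
  obtain ⟨M, hM⟩ := hK.bddAbove_image continuous_im.continuousOn
  refine ⟨M ^ s.re * EisensteinSeries.r ⟨⟨A, B⟩, hB⟩ ^ (-(2 * s.re)), fun z hz p hp => ?_⟩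
  have hzM : z.im ≤ M := hM ⟨z, hz, rfl⟩
  rw [norm_eisTerm hp, mul_assoc]
  refine mul_le_mul (Real.rpow_le_rpow z.im_pos.le hzM hs) ?_ (by positivity)
    (Real.rpow_nonneg (z.im_pos.le.trans hzM) _)
  simpa using EisensteinSeries.summand_bound_of_mem_verticalStrip (k := 2 * s.re) (by linarith)
    ![p.1, p.2] hB (hKAB hz)

lemma summable_norm_rpow_coprime {k : ℝ} (hk : 2 < k) :
    Summable fun p : {p : ℤ × ℤ // Int.gcd p.1 p.2 = 1} => ‖![p.1.1, p.1.2]‖ ^ (-k) :=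
  ((EisensteinSeries.summable_one_div_norm_rpow hk).comp_injective
    (finTwoArrowEquiv ℤ).symm.injective).subtype _

theorem integral_mul_eis_eq_tsum {X : Type*} [TopologicalSpace X] [MeasurableSpace X]
    [OpensMeasurableSpace X] (μ : Measure X) [IsFiniteMeasureOnCompacts μ] {h : X → ℂ}
    (hcont : Continuous h) (hsupp : HasCompactSupport h) {Φ : X → ℍ} (hΦ : Continuous Φ)
    {s : ℂ} (hs : 1 < s.re) :
    ∫ x, h x * eis s (Φ x) ∂μ =
      ∑' p : {p : ℤ × ℤ // Int.gcd p.1 p.2 = 1}, ∫ x, h x * eisTerm s (Φ x) p ∂μ := by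
  obtain ⟨C, hC⟩ := exists_norm_eisTerm_le_of_isCompact (hsupp.image hΦ) (s := s) (by linarith)
  refine integral_mul_tsum_of_norm_le (hcont.integrable_of_hasCompactSupport hsupp)
    (fun p => ?_) (fun p x hx => hC _ ⟨x, subset_tsupport h hx, rfl⟩ p fun h0 => ?_)
    ((summable_norm_rpow_coprime (by linarith : 2 < 2 * s.re)).mul_left C)
  · obtain ⟨γ, hγ⟩ := exists_eisTerm_eq_im_smul_cpow p.2
    simp only [hγ]
    refine (Continuous.cpow ?_ continuous_const fun x => ?_).aestronglyMeasurable
    · fun_prop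
    · exact Complex.ofReal_mem_slitPlane.2 (UpperHalfPlane.im_pos _)
  · simpa [h0] using p.2

/-- Convolving the Eisenstein series (as a function on `SL(2,ℝ)` via `g ↦ E(g·i; s)`) with
a bi-`SO(2)`-invariant test function `h` multiplies it by the "spherical transform"
`ĥ(s)`, characterized by the same eigenfunction equation for `g ↦ (Im (g·i))^s`. -/
theorem stmt_14
    [MeasurableSpace (Matrix.SpecialLinearGroup (Fin 2) ℝ)]
    [BorelSpace (Matrix.SpecialLinearGroup (Fin 2) ℝ)]
    (μG : Measure (Matrix.SpecialLinearGroup (Fin 2) ℝ)) [μG.IsHaarMeasure]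
    (h : Matrix.SpecialLinearGroup (Fin 2) ℝ → ℂ)
    (hcont : Continuous h) (hsupp : HasCompactSupport h)
    (hbi : ∀ k₁ ∈ SO2, ∀ k₂ ∈ SO2, ∀ g, h (k₁ * g * k₂) = h g)
    (s : ℂ) (hs : 1 < s.re) :
    ∃ hhat : ℂ,
      (∀ g : Matrix.SpecialLinearGroup (Fin 2) ℝ,
        (∫ x, h x *
            ((moebiusM ((g * x : Matrix.SpecialLinearGroup (Fin 2) ℝ) :
              Matrix (Fin 2) (Fin 2) ℝ) Complex.I).im : ℂ) ^ s ∂μG) =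
          hhat * ((moebiusM (g : Matrix (Fin 2) (Fin 2) ℝ) Complex.I).im : ℂ) ^ s) ∧
      (∀ g : Matrix.SpecialLinearGroup (Fin 2) ℝ,
        (∫ x, h x *
            eis s (moebiusM ((g * x : Matrix.SpecialLinearGroup (Fin 2) ℝ) :
              Matrix (Fin 2) (Fin 2) ℝ) Complex.I) ∂μG) =
          hhat * eis s (moebiusM (g : Matrix (Fin 2) (Fin 2) ℝ) Complex.I)) := by
  have hI (g : SL(2, ℝ)) : moebiusM g Complex.I = ↑(g • I) := by
    rw [← coe_I, moebiusM_eq_coe_smul]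
  simp only [SO2_eq_stabilizer, SetLike.mem_coe] at hbi
  have hleft : ∀ k ∈ MulAction.stabilizer SL(2, ℝ) I, ∀ x, h (k * x) = h x := fun k hk x => by
    simpa using hbi k hk 1 (one_mem _) x
  have hpow := integral_mul_im_smul_I_cpow μG h hleft s
  simp only [hI, coe_im]
  refine ⟨_, hpow, fun g => ?_⟩
  rw [integral_mul_eis_eq_tsum μG hcont hsupp (by fun_prop) hs, eis, ← tsum_mul_left]
  refine tsum_congr fun p => ?_
  obtain ⟨γ, hγ⟩ := exists_eisTerm_eq_im_smul_cpow p.2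
  simp only [hγ, ← mul_smul, ← mul_assoc]
  exact hpow (γ * g)
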